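/- arXiv:2509.07926 — 3 statements merged into one kernel-verified Lean document; each statement's English description precedes it below -/
import Mathlib

section
/- Let m and k be positive integers with k ≥ 3. If |D(mk,k)| > 1, then b(mk,k) < mk − m. -/
/-!
Let `B` be free of `k`-term progressions and `C` its complement in `ZMod (m * k)`. Each window
`x, x + 1, …, x + k - 1` is a progression with difference `1`, so it meets `C`; since every point
lies in exactly `k` windows, `|C| ≥ m`. If `|C| = m`, every window meets `C` exactly once, which
forces `C` to be a coset of the subgroup generated by `k`. Now take a difference `d` with
`g = gcd(d, k) > 1`: reducing mod `g` kills both `k` and `d`, so `C` lies in one residue class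
mod `g` and any progression with difference `d` in another; such a progression lies in `B`.
-/

/-- `A` is a `k`-term cyclic arithmetic progression mod `N` with common difference `d`:
it is a `k`-element subset of `ZMod N` whose elements are `t, t+d, …, t+(k-1)d`. -/
def IsAPWith (N k : ℕ) (A : Finset (ZMod N)) (d : ZMod N) : Prop :=
  A.card = k ∧ ∃ t : ZMod N, A = (Finset.range k).image (fun i : ℕ => t + (i : ZMod N) * d)

/-- `A` is a `k`-term cyclic arithmetic progression mod `N`. -/
def IsAP (N k : ℕ) (A : Finset (ZMod N)) : Prop :=
  ∃ d : ZMod N, IsAPWith N k A d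

/-- `D(N,k)`: the set of values `gcd(d,k)` where `d` ranges over all `d ∈ {1,…,N-1}` that are
a common difference of some `k`-term cyclic arithmetic progression mod `N`. -/
def Ddiff (N k : ℕ) : Set ℕ :=
  {g | ∃ d : ℕ, 1 ≤ d ∧ d ≤ N - 1 ∧
    (∃ A : Finset (ZMod N), IsAPWith N k A (d : ZMod N)) ∧ g = Nat.gcd d k}

/-- `b(N,k)`: the maximum size of a subset of `ZMod N` containing no `k`-term cyclic
arithmetic progression mod `N`. -/
noncomputable def bNum (N k : ℕ) : ℕ :=
  sSup {n | ∃ B : Finset (ZMod N), B.card = n ∧ ∀ A ⊆ B, ¬ IsAP N k A}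

/-- `χ(N,k)`: the minimum number of parts needed to partition `ZMod N` into subsets none of
which contains a `k`-term cyclic arithmetic progression mod `N` (phrased via colorings). -/
noncomputable def chiNum (N k : ℕ) : ℕ :=
  sInf {r | ∃ c : ZMod N → Fin r, ∀ A : Finset (ZMod N), IsAP N k A → ¬ ∃ i, ∀ x ∈ A, c x = i}

open Finset

def APFree (N k : ℕ) (B : Finset (ZMod N)) : Prop :=
  ∀ A ⊆ B, ¬ IsAP N k A

variable {N k : ℕ}

lemma bNum_lt_of_forall_card_lt {n : ℕ} (hk : k ≠ 0)
    (h : ∀ B : Finset (ZMod N), APFree N k B → B.card < n) : bNum N k < n := by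
  have hempty : APFree N k ∅ := fun A hA ⟨_, hcard, _⟩ =>
    hk (by rw [← hcard, subset_empty.1 hA, card_empty])
  obtain ⟨B, hB, hfree⟩ : bNum N k ∈ {n | ∃ B : Finset (ZMod N), B.card = n ∧ APFree N k B} :=
    Nat.sSup_mem ⟨0, ∅, card_empty, hempty⟩ ⟨n, by rintro _ ⟨B, rfl, hB⟩; exact (h B hB).le⟩
  exact hB ▸ h B hfree

lemma isAP_image_of_injOn {t d : ZMod N} (h : Set.InjOn (fun i : ℕ => t + i * d) (range k)) :
    IsAP N k ((range k).image fun i : ℕ => t + i * d) :=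
  ⟨d, (card_image_of_injOn h).trans (card_range k), t, rfl⟩

lemma IsAPWith.injOn_add_mul {A : Finset (ZMod N)} {d : ZMod N} (hA : IsAPWith N k A d)
    (s : ZMod N) : Set.InjOn (fun i : ℕ => s + i * d) (range k) := by
  obtain ⟨hcard, t, rfl⟩ := hA
  have ht : Set.InjOn (fun i : ℕ => t + i * d) (range k) :=
    injOn_of_card_image_eq (hcard.trans (card_range k).symm)
  exact fun i hi j hj hij => ht hi hj (congrArg (t + ·) (add_left_cancel hij))

lemma injOn_natCast_range (hk : k ≤ N) : Set.InjOn (fun i : ℕ => (i : ZMod N)) (range k) := by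
  intro i hi j hj hij
  rw [coe_range, Set.mem_Iio] at hi hj
  simpa [ZMod.natCast_eq_natCast_iff' i j N, Nat.mod_eq_of_lt (hi.trans_le hk),
    Nat.mod_eq_of_lt (hj.trans_le hk)] using hij

section Windows

variable [NeZero N] {C : Finset (ZMod N)}

lemma APFree.exists_add_mem_compl {B : Finset (ZMod N)} (hB : APFree N k B) (hk : k ≤ N)
    (x : ZMod N) : ∃ i < k, x + i ∈ Bᶜ := by
  by_contra! h
  refine hB _ ?_ (isAP_image_of_injOn (t := x) (d := 1) ?_)
  · intro a ha
    obtain ⟨i, hi, rfl⟩ := mem_image.mp ha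
    simpa using h i (mem_range.mp hi)
  · exact fun i hi j hj hij => injOn_natCast_range hk hi hj (by simpa using hij)

lemma surjOn_sub_of_forall_exists_add_mem (hC : ∀ x : ZMod N, ∃ i < k, x + i ∈ C) :
    Set.SurjOn (fun p : ZMod N × ℕ => p.1 - p.2) ↑(C ×ˢ range k) ↑(univ : Finset (ZMod N)) := by
  intro x _
  obtain ⟨i, hi, hxi⟩ := hC x
  exact ⟨(x + i, i), by simp [hxi, hi], by simp⟩

lemma le_card_mul_of_forall_exists_add_mem (hC : ∀ x : ZMod N, ∃ i < k, x + i ∈ C) :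
    N ≤ C.card * k := by
  simpa [card_product, ZMod.card] using
    card_le_card_of_surjOn _ (surjOn_sub_of_forall_exists_add_mem hC)

lemma add_natCast_mem_of_card_mul_eq (hC : ∀ x : ZMod N, ∃ i < k, x + i ∈ C)
    (heq : C.card * k = N) {c : ZMod N} (hc : c ∈ C) : c + k ∈ C := by
  have hinj := injOn_of_surjOn_of_card_le _ (fun _ _ => mem_coe.2 (mem_univ _))
    (surjOn_sub_of_forall_exists_add_mem hC) (by simp [card_product, heq, ZMod.card])
  obtain ⟨i, hi, hci⟩ := hC (c + 1)
  -- Otherwise the windows starting at `c` and at `c + 1` both contain `c + 1 + i`.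
  have hik : i + 1 = k := by
    by_contra hne
    have := hinj (x₁ := (c + 1 + i, i + 1)) (x₂ := (c, 0)) (by simp [hci]; omega)
      (by simp [hc]; omega) (by push_cast; ring)
    simp at this
  have : c + 1 + (i : ZMod N) = c + k := by rw [← hik]; push_cast; ring
  rwa [this] at hci

lemma le_card_of_forall_add_mem {m : ℕ} (hmk : m * k = N) {S : Finset (ZMod N)}
    (hS : ∀ c ∈ S, c + k ∈ S) {c₀ : ZMod N} (hc₀ : c₀ ∈ S) : m ≤ S.card := by
  have hk : 0 < k := Nat.pos_of_ne_zero fun h => NeZero.ne N (by rw [← hmk, h, mul_zero])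
  have hmem : ∀ j : ℕ, c₀ + ((j * k : ℕ) : ZMod N) ∈ S := by
    intro j
    induction j with
    | zero => simpa using hc₀
    | succ j ih => simpa [add_mul, add_assoc] using hS _ ih
  calc m = ((range m).image fun j : ℕ => c₀ + ((j * k : ℕ) : ZMod N)).card := by
        rw [card_image_of_injOn, card_range]
        intro i hi j hj hij
        have hlt : ∀ {j}, j ∈ (range m : Set ℕ) → j * k ∈ (range N : Set ℕ) := fun hj => by
          rw [coe_range, Set.mem_Iio] at hj ⊢
          exact hmk ▸ Nat.mul_lt_mul_of_pos_right hj hk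
        exact Nat.eq_of_mul_eq_mul_right hk
          (injOn_natCast_range le_rfl (hlt hi) (hlt hj) (add_left_cancel hij))
    _ ≤ S.card := card_le_card (image_subset_iff.2 fun j _ => hmem j)

lemma exists_isAP_subset_compl {m g d : ℕ} (hmk : m * k = N) (hg : g ≠ 1) (hgk : g ∣ k)
    (hgd : g ∣ d) {A : Finset (ZMod N)} (hA : IsAPWith N k A d) (hC : ∀ c ∈ C, c + k ∈ C)
    (hCm : C.card ≤ m) {c₀ : ZMod N} (hc₀ : c₀ ∈ C) : ∃ A' ⊆ Cᶜ, IsAP N k A' := by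
  have : Nontrivial (ZMod g) := ZMod.nontrivial_iff.2 hg
  let π := ZMod.castHom (hgk.trans (Dvd.intro_left m hmk)) (ZMod g)
  have hπk : π k = 0 := by simpa [π] using (ZMod.natCast_eq_zero_iff k g).2 hgk
  have hπC : ∀ c ∈ C, π c = π c₀ := by
    refine filter_card_eq (le_antisymm (card_filter_le _ _)
      (hCm.trans (le_card_of_forall_add_mem hmk ?_ (mem_filter.2 ⟨hc₀, rfl⟩))))
    intro c hc
    rw [mem_filter] at hc ⊢
    exact ⟨hC c hc.1, by rw [map_add, hπk, add_zero, hc.2]⟩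
  refine ⟨_, ?_, isAP_image_of_injOn (hA.injOn_add_mul (c₀ + 1))⟩
  intro a ha
  obtain ⟨i, -, rfl⟩ := mem_image.mp ha
  rw [mem_compl]
  intro haC
  have h := hπC _ haC
  rw [map_add, map_add, map_mul, map_natCast, map_natCast, map_one,
    (ZMod.natCast_eq_zero_iff d g).2 hgd, mul_zero, add_zero] at h
  simp at h

lemma APFree.card_lt {m g d : ℕ} (hmk : m * k = N) (hg : g ≠ 1) (hgk : g ∣ k) (hgd : g ∣ d)
    {A : Finset (ZMod N)} (hA : IsAPWith N k A d) {B : Finset (ZMod N)} (hB : APFree N k B) :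
    B.card < N - m := by
  have hwin := hB.exists_add_mem_compl (Nat.le_of_dvd (NeZero.pos N) (Dvd.intro_left m hmk))
  have hBC : B.card + Bᶜ.card = N := by rw [card_add_card_compl, ZMod.card]
  suffices m < Bᶜ.card by omega
  by_contra! hCm
  have heq : Bᶜ.card * k = N := le_antisymm ((Nat.mul_le_mul_right k hCm).trans_eq hmk)
    (le_card_mul_of_forall_exists_add_mem hwin)
  obtain ⟨c₀, hc₀⟩ : Bᶜ.Nonempty :=
    card_pos.mp (Nat.pos_of_ne_zero fun h => NeZero.ne N (by rw [← heq, h, zero_mul]))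
  obtain ⟨A', hA'B, hA'⟩ := exists_isAP_subset_compl hmk hg hgk hgd hA
    (fun _ => add_natCast_mem_of_card_mul_eq hwin heq) hCm hc₀
  exact hB A' (by simpa using hA'B) hA'

end Windows

theorem stmt_5 (m k : ℕ) (hm : 0 < m) (hk : 3 ≤ k)
    (hcard : (Ddiff (m * k) k).Nontrivial) :
    bNum (m * k) k < m * k - m := by
  have : NeZero (m * k) := ⟨(Nat.mul_pos hm (by omega)).ne'⟩
  obtain ⟨_, ⟨d, -, -, ⟨A, hA⟩, rfl⟩, hg⟩ := hcard.exists_ne 1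
  exact bNum_lt_of_forall_card_lt (by omega) fun B hB =>
    hB.card_lt rfl hg (Nat.gcd_dvd_right d k) (Nat.gcd_dvd_left d k) hA
end

section
/- Let m and k be positive integers with k ≥ 3. Write D(mk,k) = {d_0 < d_1 < ⋯ < d_j} and set d_{-1} := 0. For each i ∈ {0,…,j}, define F_i := ⋃_{α = d_{i−1}+1}^{d_i} {d_i·k − α, (d_i+1)·k − α, …, m·k − α} ⊆ Z_{mk}, and let F := ⋃_{i=0}^{j} F_i. Then |F| = Σ_{i=0}^{j} (d_i − d_{i−1})(m − d_i + 1). -/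
/-!
Every element `g = gcd d k` of `D(mk, k)` divides `k` and satisfies `g * k ≤ m * k`: the `k` terms
of a progression with difference `d` are distinct, so the additive order `mk / gcd(mk, d)` of `d`
is at least `k`, while `g ∣ gcd(mk, d)`. Hence every `d_i ≤ min m k`, and
`F_i` is the image of the rectangle `[d_i, m] × (d_{i-1}, d_i]` under `(a, α) ↦ a k - α`.
This map is injective on `[1, m] × [1, k]` (it is the mixed-radix representation
`(a - 1) k + (k - α)` of a number below `mk`), and the rectangles are pairwise disjoint
because their second factors are, so `|F|` is the sum of the areas of the rectangles.
-/

lemma le_addOrderOf_of_injOn {G : Type*} [AddLeftCancelMonoid G] {x : G} (hx : IsOfFinAddOrder x)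
    (t : G) {k : ℕ} (h : Set.InjOn (fun i : ℕ => t + i • x) (Set.Iio k)) : k ≤ addOrderOf x := by
  by_contra! hlt
  have h0 : (0 : ℕ) ∈ Set.Iio k := hx.addOrderOf_pos.trans hlt
  have := h h0 hlt (by simp [addOrderOf_nsmul_eq_zero])
  exact hx.addOrderOf_pos.ne this

section Ddiff

variable {N k g : ℕ}

lemma dvd_of_mem_Ddiff (hg : g ∈ Ddiff N k) : g ∣ k := by
  obtain ⟨d, -, -, -, rfl⟩ := hg
  exact Nat.gcd_dvd_right d k

lemma mul_le_of_mem_Ddiff (hkN : k ∣ N) (hg : g ∈ Ddiff N k) : g * k ≤ N := by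
  obtain ⟨d, hd, hdN, ⟨A, hcard, t, rfl⟩, rfl⟩ := hg
  have hN : N ≠ 0 := by omega
  have : NeZero N := ⟨hN⟩
  have hinj : Set.InjOn (fun i : ℕ => t + i • (d : ZMod N)) (Set.Iio k) := by
    have := Finset.card_image_iff.mp (hcard.trans (Finset.card_range k).symm)
    simpa [nsmul_eq_mul] using this
  have hk := le_addOrderOf_of_injOn (isOfFinAddOrder_of_finite _) t hinj
  rw [ZMod.addOrderOf_coe d hN, Nat.le_div_iff_mul_le (Nat.gcd_pos_of_pos_left d (by omega))] at hk
  have hg : d.gcd k ≤ N.gcd d := Nat.le_of_dvd (Nat.gcd_pos_of_pos_right N hd)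
    (Nat.dvd_gcd ((Nat.gcd_dvd_right d k).trans hkN) (Nat.gcd_dvd_left d k))
  calc d.gcd k * k ≤ N.gcd d * k := Nat.mul_le_mul_right k hg
    _ ≤ N := by rwa [mul_comm]

end Ddiff

lemma mul_sub_injOn (k : ℕ) :
    Set.InjOn (fun p : ℕ × ℕ => p.1 * k - p.2) (Set.Ici 1 ×ˢ Set.Icc 1 k) := by
  rintro ⟨a, b⟩ ⟨ha, hb1, hbk⟩ ⟨a', b'⟩ ⟨ha', hb1', hbk'⟩ h
  simp only [Set.mem_Ici] at ha ha' h
  dsimp only at hb1 hbk hb1' hbk'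
  have hsum : a * k + b' = a' * k + b := by
    have := Nat.le_mul_of_pos_left k ha
    have := Nat.le_mul_of_pos_left k ha'
    omega
  obtain rfl : a = a' := by
    by_contra hne
    rcases Nat.lt_or_gt_of_ne hne with hlt | hlt <;> nlinarith
  simp only [Prod.mk.injEq, true_and]
  omega

lemma natCast_mul_sub_injOn (m k : ℕ) :
    Set.InjOn (fun p : ℕ × ℕ => ((p.1 * k - p.2 : ℕ) : ZMod (m * k)))
      (Set.Icc 1 m ×ˢ Set.Icc 1 k) := by
  have hlt : ∀ p ∈ Set.Icc 1 m ×ˢ Set.Icc 1 k, p.1 * k - p.2 < m * k := by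
    rintro p ⟨⟨ha, ham⟩, hb, hbk⟩
    have : p.2 ≤ p.1 * k := hbk.trans (Nat.le_mul_of_pos_left k ha)
    exact (Nat.sub_lt (Nat.lt_of_lt_of_le hb this) hb).trans_le (Nat.mul_le_mul_right k ham)
  intro p hp q hq h
  rw [ZMod.natCast_eq_natCast_iff', Nat.mod_eq_of_lt (hlt p hp), Nat.mod_eq_of_lt (hlt q hq)] at h
  exact mul_sub_injOn k (Set.prod_mono Set.Icc_subset_Ici_self le_rfl hp)
    (Set.prod_mono Set.Icc_subset_Ici_self le_rfl hq) h

open Finset in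
lemma card_biUnion_image_mul_sub (m k n : ℕ) (e : ℕ → ℕ) (hmono : ∀ i < n, e i < e (i + 1))
    (hem : ∀ i < n, e (i + 1) ≤ m) (hek : ∀ i < n, e (i + 1) ≤ k) :
    ((range n).biUnion fun i =>
      image (fun p : ℕ × ℕ => ((p.1 * k - p.2 : ℕ) : ZMod (m * k)))
        (Icc (e (i + 1)) m ×ˢ Icc (e i + 1) (e (i + 1)))).card =
      ∑ i ∈ range n, (e (i + 1) - e i) * (m - e (i + 1) + 1) := by
  have he : MonotoneOn e (Set.Iic n) :=
    (strictMonoOn_Iic_of_lt_succ fun i hi => hmono i hi).monotoneOn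
  set R : ℕ → Finset (ℕ × ℕ) := fun i => Icc (e (i + 1)) m ×ˢ Icc (e i + 1) (e (i + 1))
  have hsub : ↑((range n).biUnion R) ⊆ Set.Icc 1 m ×ˢ Set.Icc 1 k := by
    intro p hp
    simp only [R, coe_biUnion, coe_range, Set.mem_Iio, coe_product, coe_Icc, Set.mem_iUnion,
      Set.mem_prod, Set.mem_Icc] at hp ⊢
    obtain ⟨i, hi, ⟨ha1, ha2⟩, hb1, hb2⟩ := hp
    have := hmono i hi
    have := hem i hi
    have := hek i hi
    omega
  have hdisj : (range n : Set ℕ).PairwiseDisjoint R := by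
    suffices ∀ x < n, ∀ y < n, x < y → Disjoint (R x) (R y) by
      intro x hx y hy hxy
      simp only [coe_range, Set.mem_Iio] at hx hy
      rcases Nat.lt_or_gt_of_ne hxy with h | h
      exacts [this x hx y hy h, (this y hy x hx h).symm]
    intro x hx y hy hxy
    have : e (x + 1) ≤ e y := he (Set.mem_Iic.mpr (by omega)) (Set.mem_Iic.mpr (by omega)) hxy
    refine disjoint_product.mpr (Or.inr (disjoint_left.mpr fun b hb hb' => ?_))
    simp only [mem_Icc] at hb hb'
    omega
  rw [← biUnion_image (t := R), card_image_of_injOn ((natCast_mul_sub_injOn m k).mono hsub),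
    card_biUnion hdisj]
  refine sum_congr rfl fun i hi => ?_
  have hi : i < n := mem_range.mp hi
  rw [card_product, Nat.card_Icc, Nat.card_Icc, mul_comm]
  have := hem i hi
  congr 1 <;> omega

theorem stmt_10_general (m k : ℕ) (hk : 3 ≤ k) (j : ℕ) (e : ℕ → ℕ)
    (hmono : ∀ i ≤ j, e i < e (i + 1))
    (hD : Ddiff (m * k) k = {x | ∃ i, 1 ≤ i ∧ i ≤ j + 1 ∧ x = e i})
    (F : ℕ → Finset (ZMod (m * k)))
    (hF : ∀ i, F i =
      Finset.image (fun p : ℕ × ℕ => ((p.1 * k - p.2 : ℕ) : ZMod (m * k)))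
        ((Finset.Icc (e (i + 1)) m) ×ˢ (Finset.Icc (e i + 1) (e (i + 1))))) :
    ((Finset.range (j + 1)).biUnion F).card =
      ∑ i ∈ Finset.range (j + 1), (e (i + 1) - e i) * (m - e (i + 1) + 1) := by
  have hmem : ∀ i < j + 1, e (i + 1) ∈ Ddiff (m * k) k :=
    fun i hi => hD ▸ ⟨i + 1, by omega, by omega, rfl⟩
  rw [show F = _ from funext hF]
  refine card_biUnion_image_mul_sub m k (j + 1) e (fun i hi => hmono i (by omega))
    (fun i hi => ?_) (fun i hi => ?_)
  · exact Nat.le_of_mul_le_mul_right (mul_le_of_mem_Ddiff (dvd_mul_left k m) (hmem i hi))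
      (by omega)
  · exact Nat.le_of_dvd (by omega) (dvd_of_mem_Ddiff (hmem i hi))

theorem stmt_10 (m k : ℕ) (hm : 0 < m) (hk : 3 ≤ k) (j : ℕ) (e : ℕ → ℕ)
    (he0 : e 0 = 0)
    (hmono : ∀ i ≤ j, e i < e (i + 1))
    (hD : Ddiff (m * k) k = {x | ∃ i, 1 ≤ i ∧ i ≤ j + 1 ∧ x = e i})
    (F : ℕ → Finset (ZMod (m * k)))
    (hF : ∀ i, F i =
      Finset.image (fun p : ℕ × ℕ => ((p.1 * k - p.2 : ℕ) : ZMod (m * k)))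
        ((Finset.Icc (e (i + 1)) m) ×ˢ (Finset.Icc (e i + 1) (e (i + 1))))) :
    ((Finset.range (j + 1)).biUnion F).card =
      ∑ i ∈ Finset.range (j + 1), (e (i + 1) - e i) * (m - e (i + 1) + 1) :=
  stmt_10_general m k hk j e hmono hD F hF
end

section
/- Let m and k be integers with 3 ≤ k < m. Then 2 ≤ χ(mk,k) ≤ 3 + ⌈(m−k)·k / (k−1)⌉. -/
/-!
Colour `ZMod (m * k)`, read as `[0, m * k)`, with `q = ⌈(m - k) k / (k - 1)⌉` blocks of `k - 1`
consecutive residues, too short to hold a `k`-term progression, and three more colours for the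
rest. If `m < 2k` the rest lies in `[m, m k)` and `x` gets the third of `ZMod m`, an arc of length
`⌈m / 3⌉ < k`, containing `x mod m`. If `m ≥ 2k` the rest is an interval of length `s ≤ k²` with
`2 s ≤ m k + 1`, cut into blocks of length `k - 1` coloured periodically mod 3.

Both cases rest on one rigidity fact: a progression mod `n` inside an interval of length `L` with
`2 L ≤ n + 1` is a genuine progression of integers, since consecutive differences are congruent
mod `n` and too small to differ. For the arcs this makes the residues mod `m` either all equal,
so that the `k` terms need `k` distinct quotients in `[1, k)`, or pairwise distinct, too many for
one arc. For the mod-3 blocks the step is at most `2 (k - 1)`, so consecutive terms stay in one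
block and the whole progression fits in a block. The lower bound is the progression
`0, 1, …, k - 1`.
-/

def IsAPFree (N k : ℕ) (S : Set (ZMod N)) : Prop :=
  ∀ A : Finset (ZMod N), ↑A ⊆ S → ¬ IsAP N k A

def IsAPFreeColoring {N r : ℕ} (k : ℕ) (c : ZMod N → Fin r) : Prop :=
  ∀ A : Finset (ZMod N), IsAP N k A → ¬ ∃ i, ∀ x ∈ A, c x = i

section Coloring

variable {N k r : ℕ}

theorem chiNum_le (c : ZMod N → Fin r) (hc : IsAPFreeColoring k c) : chiNum N k ≤ r :=
  Nat.sInf_le ⟨c, hc⟩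

theorem isAP_range (hk : k ≤ N) :
    IsAP N k ((Finset.range k).image (fun i : ℕ => 0 + (i : ZMod N) * 1)) := by
  refine ⟨1, ?_, 0, rfl⟩
  rw [Finset.card_image_of_injOn, Finset.card_range]
  intro i hi j hj hij
  simp only [Finset.coe_range, Set.mem_Iio, zero_add, mul_one] at hi hj hij
  rwa [ZMod.natCast_eq_natCast_iff' i j N, Nat.mod_eq_of_lt (by omega),
    Nat.mod_eq_of_lt (by omega)] at hij

theorem two_le_chiNum (hk : k ≤ N) (c : ZMod N → Fin r) (hc : IsAPFreeColoring k c) :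
    2 ≤ chiNum N k := by
  obtain ⟨c', hc'⟩ : ∃ c' : ZMod N → Fin (chiNum N k), IsAPFreeColoring k c' :=
    Nat.sInf_mem (s := {r | ∃ c : ZMod N → Fin r, IsAPFreeColoring k c}) ⟨r, c, hc⟩
  by_contra! h
  refine hc' _ (isAP_range hk) ⟨c' 0, fun x _ => Fin.ext ?_⟩
  have := (c' x).isLt
  have := (c' 0).isLt
  omega

theorem exists_isAPFreeColoring_of_bounded (f : ZMod N → ℕ) (hf : ∀ x, f x < r)
    (hfree : ∀ j, IsAPFree N k {x | f x = j}) :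
    ∃ c : ZMod N → Fin r, IsAPFreeColoring k c := by
  refine ⟨fun x => ⟨f x, hf x⟩, fun A hA ⟨i, hi⟩ => hfree i A (fun x hx => ?_) hA⟩
  exact congrArg Fin.val (hi x hx)

end Coloring

section APFree

variable {N k : ℕ}

theorem IsAPFree.mono {S T : Set (ZMod N)} (hST : S ⊆ T) (hT : IsAPFree N k T) :
    IsAPFree N k S :=
  fun A hA => hT A (hA.trans hST)

theorem isAPFree_of_forall [NeZero N] {P : ℕ → Prop}
    (h : ∀ (x : ℕ → ℕ) (t d : ZMod N), (∀ i, (x i : ZMod N) = t + i * d) → (∀ i, x i < N) →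
      Set.InjOn x (Set.Iio k) → (∀ i < k, P (x i)) → False) :
    IsAPFree N k {y | P y.val} := by
  rintro A hAS ⟨d, hcard, t, rfl⟩
  refine h (fun i => (t + i * d).val) t d (fun i => ZMod.natCast_zmod_val _)
    (fun i => ZMod.val_lt _) ?_ fun i hi => hAS (Finset.mem_image_of_mem _ (by simpa using hi))
  have hinj := Finset.injOn_of_card_image_eq (hcard.trans (Finset.card_range k).symm)
  rw [Finset.coe_range] at hinj
  exact ZMod.val_injective N |>.comp_injOn hinj

end APFree

theorem le_of_injOn_Iio_of_mem_Ico {k lo L : ℕ} {y : ℕ → ℕ} (hinj : Set.InjOn y (Set.Iio k))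
    (hmem : ∀ i < k, y i ∈ Set.Ico lo (lo + L)) : k ≤ L := by
  have := Finset.card_le_card_of_injOn y (s := Finset.range k) (t := Finset.Ico lo (lo + L))
    (fun i hi => by simpa using hmem i (by simpa using hi)) (by simpa using hinj)
  simpa using this

theorem isAPFree_val_mem_Ico {N k lo L : ℕ} [NeZero N] (hL : L < k) :
    IsAPFree N k {x : ZMod N | x.val ∈ Set.Ico lo (lo + L)} :=
  isAPFree_of_forall fun _ _ _ _ _ hinj hmem => (le_of_injOn_Iio_of_mem_Ico hinj hmem).not_gt hL

theorem Nat.mem_Ico_of_div_eq {v c j : ℕ} (hc : 0 < c) (h : v / c = j) :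
    v ∈ Set.Ico (j * c) (j * c + c) := by
  have := (Nat.div_eq_iff hc).mp h
  exact ⟨this.1, by omega⟩

theorem intCast_eq_add_mul_of_mem_Ico {n k lo L : ℕ} (hL : 2 * L ≤ n + 1) {x : ℕ → ℕ}
    {t d : ZMod n} (hx : ∀ i < k, (x i : ZMod n) = t + i * d)
    (hmem : ∀ i < k, x i ∈ Set.Ico lo (lo + L)) :
    ∀ i < k, (x i : ℤ) = x 0 + i * ((x 1 : ℤ) - x 0) := by
  have hstep : ∀ i, i + 1 < k → (x (i + 1) : ℤ) - x i = (x 1 : ℤ) - x 0 := by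
    intro i hi
    have hdvd : (n : ℤ) ∣ ((x (i + 1) : ℤ) - x i) - ((x 1 : ℤ) - x 0) := by
      rw [← ZMod.intCast_zmod_eq_zero_iff_dvd]
      push_cast
      rw [hx _ hi, hx i (by omega), hx 1 (by omega), hx 0 (by omega)]
      push_cast
      ring
    have h0 := hmem 0 (by omega)
    have h1 := hmem 1 (by omega)
    have hi0 := hmem i (by omega)
    have hi1 := hmem (i + 1) hi
    simp only [Set.mem_Ico] at h0 h1 hi0 hi1
    have := Int.eq_zero_of_abs_lt_dvd hdvd (abs_lt.mpr ⟨by omega, by omega⟩)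
    linarith
  intro i hi
  induction i with
  | zero => simp
  | succ i ih =>
    push_cast
    linear_combination hstep i hi + ih (by omega)

theorem isAPFree_residue_mem_Ico {m k lo a : ℕ} [NeZero (m * k)] (hak : a < k)
    (ha : 2 * a ≤ m + 1) :
    IsAPFree (m * k) k {x : ZMod (m * k) | m ≤ x.val ∧ x.val % m ∈ Set.Ico lo (lo + a)} := by
  refine isAPFree_of_forall (N := m * k) (P := fun v => m ≤ v ∧ v % m ∈ Set.Ico lo (lo + a))
    fun x t d hx hxN hinj hS => ?_
  let φ := ZMod.castHom (dvd_mul_right m k) (ZMod m)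
  have hres : ∀ i < k, ((x i % m : ℕ) : ZMod m) = φ t + i * φ d := by
    intro i _
    rw [ZMod.natCast_mod, ← map_natCast φ, hx, map_add, map_mul, map_natCast]
  have hAP := intCast_eq_add_mul_of_mem_Ico ha hres fun i hi => (hS i hi).2
  set e : ℤ := ((x 1 % m : ℕ) : ℤ) - ((x 0 % m : ℕ) : ℤ)
  by_cases he : e = 0
  · -- all terms share their residue mod `m`, so their quotients by `m` are distinct
    have hr : ∀ i < k, x i % m = x 0 % m := fun i hi => by
      have := hAP i hi
      rw [he, mul_zero, add_zero] at this
      exact_mod_cast this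
    have hquot : Set.InjOn (fun i => x i / m) (Set.Iio k) := by
      intro i hi j hj hij
      apply hinj hi hj
      rw [← Nat.div_add_mod (x i) m, ← Nat.div_add_mod (x j) m, hr i hi, hr j hj]
      exact congrArg (m * · + x 0 % m) hij
    refine (le_of_injOn_Iio_of_mem_Ico (lo := 1) (L := k - 1) hquot fun i hi => ?_).not_gt
      (by omega)
    have hlt : x i / m < k := Nat.div_lt_of_lt_mul (hxN i)
    have hm : 0 < m := Nat.pos_of_ne_zero fun h => NeZero.ne (m * k) (by simp [h])
    have hge : 1 ≤ x i / m := (Nat.one_le_div_iff hm).mpr (hS i hi).1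
    exact ⟨hge, by omega⟩
  · have hres_inj : Set.InjOn (fun i => x i % m) (Set.Iio k) := by
      intro i hi j hj hij
      have h := (hAP i hi).symm.trans ((congrArg (Nat.cast : ℕ → ℤ) hij).trans (hAP j hj))
      exact_mod_cast mul_right_cancel₀ he (add_left_cancel h)
    exact (le_of_injOn_Iio_of_mem_Ico hres_inj fun i hi => (hS i hi).2).not_gt hak

theorem Nat.div_eq_div_of_mod_three_eq {u v c : ℕ} (huv : u ≤ v + 2 * c) (hvu : v ≤ u + 2 * c)
    (h : u / c % 3 = v / c % 3) : u / c = v / c := by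
  rcases Nat.eq_zero_or_pos c with rfl | hc
  · simp
  have hu : u / c ≤ v / c + 2 := by
    calc u / c ≤ (v + 2 * c) / c := Nat.div_le_div_right huv
      _ = v / c + 2 := Nat.add_mul_div_right _ _ hc
  have hv : v / c ≤ u / c + 2 := by
    calc v / c ≤ (u + 2 * c) / c := Nat.div_le_div_right hvu
      _ = u / c + 2 := Nat.add_mul_div_right _ _ hc
  omega

theorem isAPFree_val_mem_Ico_div_mod_three {N k c lo s j : ℕ} [NeZero N] (hc : 0 < c)
    (hck : c < k) (hs : s ≤ (k - 1) * (2 * c + 1)) (hN : 2 * s ≤ N + 1) :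
    IsAPFree N k {x : ZMod N | x.val ∈ Set.Ico lo (lo + s) ∧ x.val / c % 3 = j} := by
  refine isAPFree_of_forall (N := N) (P := fun v => v ∈ Set.Ico lo (lo + s) ∧ v / c % 3 = j)
    fun x t d hx _ hinj hS => ?_
  have hAP := intCast_eq_add_mul_of_mem_Ico hN (fun i _ => hx i) fun i hi => (hS i hi).1
  set e : ℤ := (x 1 : ℤ) - x 0
  have he : |e| ≤ 2 * c := by
    have h0 := (hS 0 (by omega)).1
    have h1 := (hS (k - 1) (by omega)).1
    simp only [Set.mem_Ico] at h0 h1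
    have hspan : |(x (k - 1) : ℤ) - x 0| < s := abs_lt.mpr ⟨by omega, by omega⟩
    rw [hAP (k - 1) (by omega), add_sub_cancel_left, abs_mul, Nat.abs_cast] at hspan
    have hs' : (s : ℤ) ≤ ((k - 1 : ℕ) : ℤ) * (2 * c + 1) := by exact_mod_cast hs
    have := lt_of_mul_lt_mul_left (hspan.trans_le hs') (Nat.cast_nonneg _)
    omega
  have hstep : ∀ i, i + 1 < k → x (i + 1) / c = x i / c := by
    intro i hi
    have hnext : (x (i + 1) : ℤ) = x i + e := by
      rw [hAP (i + 1) hi, hAP i (by omega)]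
      push_cast
      ring
    have := abs_le.mp he
    exact Nat.div_eq_div_of_mod_three_eq (by omega) (by omega)
      ((hS _ hi).2.trans (hS i (by omega)).2.symm)
  have hblock : ∀ i < k, x i / c = x 0 / c := by
    intro i hi
    induction i with
    | zero => rfl
    | succ i ih => rw [hstep i hi, ih (by omega)]
  exact (le_of_injOn_Iio_of_mem_Ico hinj
    fun i hi => Nat.mem_Ico_of_div_eq hc (hblock i hi)).not_gt hck

/-- Colour `[0, c * q)` by `q` blocks of length `c`, using colours `r, …, r + q - 1`, and the rest
by `g`, using colours `0, …, r - 1`. -/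
theorem exists_isAPFreeColoring_of_blocks {N k c q r : ℕ} [NeZero N] (hc : c < k)
    (g : ℕ → ℕ) (hg : ∀ v, g v < r)
    (hfree : ∀ j, IsAPFree N k {x : ZMod N | c * q ≤ x.val ∧ g x.val = j}) :
    ∃ col : ZMod N → Fin (r + q), IsAPFreeColoring k col := by
  refine exists_isAPFreeColoring_of_bounded
    (fun x => if x.val < c * q then r + x.val / c else g x.val) (fun x => ?_) fun j => ?_
  · split_ifs with h
    · have := Nat.div_lt_of_lt_mul h
      omega
    · exact (hg _).trans_le (Nat.le_add_right r q)
  by_cases hj : j < r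
  · refine (hfree j).mono fun x hx => ?_
    simp only [Set.mem_ofPred] at hx
    split_ifs at hx with h
    · have : r ≤ j := hx ▸ Nat.le_add_right _ _
      omega
    · exact ⟨not_lt.mp h, hx⟩
  · refine (isAPFree_val_mem_Ico (lo := (j - r) * c) hc).mono fun x hx => ?_
    simp only [Set.mem_ofPred] at hx
    split_ifs at hx with h
    · exact Nat.mem_Ico_of_div_eq (Nat.pos_of_ne_zero fun hc0 => by simp [hc0] at h)
        (by rw [← hx, Nat.add_sub_cancel_left])
    · exact absurd hx (by have := hg x.val; omega)

theorem exists_isAPFreeColoring_residue {m k q : ℕ} [NeZero (m * k)] (hmk : m + 3 ≤ 3 * k)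
    (hmq : m ≤ (k - 1) * q) :
    ∃ col : ZMod (m * k) → Fin (3 + q), IsAPFreeColoring k col := by
  have hm : 0 < m := Nat.pos_of_ne_zero fun h => NeZero.ne (m * k) (by simp [h])
  refine exists_isAPFreeColoring_of_blocks (c := k - 1) (by omega)
    (fun v => v % m / ((m + 2) / 3))
    (fun v => Nat.div_lt_of_lt_mul (by have := Nat.mod_lt v hm; omega)) fun j => ?_
  refine (isAPFree_residue_mem_Ico (lo := j * ((m + 2) / 3)) (a := (m + 2) / 3) (by omega)
    (by omega)).mono fun x hx => ?_
  exact ⟨hmq.trans hx.1, Nat.mem_Ico_of_div_eq (by omega) hx.2⟩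

theorem exists_isAPFreeColoring_div_mod_three {N k q : ℕ} [NeZero N] (hk : 2 ≤ k)
    (hq : (k - 1) * q ≤ N) (hs : N - (k - 1) * q ≤ (k - 1) * (2 * k - 1))
    (hN : 2 * (N - (k - 1) * q) ≤ N + 1) :
    ∃ col : ZMod N → Fin (3 + q), IsAPFreeColoring k col := by
  refine exists_isAPFreeColoring_of_blocks (c := k - 1) (by omega) (fun v => v / (k - 1) % 3)
    (fun v => Nat.mod_lt _ (by norm_num)) fun j => ?_
  have hs' : N - (k - 1) * q ≤ (k - 1) * (2 * (k - 1) + 1) := by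
    rwa [show 2 * (k - 1) + 1 = 2 * k - 1 by omega]
  refine (isAPFree_val_mem_Ico_div_mod_three (c := k - 1) (lo := (k - 1) * q) (j := j)
    (by omega) (by omega) hs' hN).mono fun x hx => ?_
  have := ZMod.val_lt x
  exact ⟨⟨hx.1, by omega⟩, hx.2⟩

theorem le_pred_mul_of_sub_mul_le {m k q : ℕ} (hk : 3 ≤ k) (hkm : k < m) (hm : m ≤ 2 * k)
    (h : (m - k) * k + (k - 1) - 1 < (k - 1) * q + (k - 1)) : m ≤ (k - 1) * q := by
  rcases Nat.lt_or_ge m (k + 2) with hm1 | hm2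
  · have hq : 2 ≤ q := by
      by_contra! hq
      have := Nat.mul_le_mul_left (k - 1) (Nat.le_of_lt_succ hq)
      rw [show m - k = 1 by omega] at h
      omega
    have := Nat.mul_le_mul_left (k - 1) hq
    omega
  · have := Nat.mul_le_mul_right k (show 2 ≤ m - k by omega)
    omega

theorem stmt_17 (m k : ℕ) (hk : 3 ≤ k) (hkm : k < m) :
    2 ≤ chiNum (m * k) k ∧
      chiNum (m * k) k ≤ 3 + ((m - k) * k + (k - 1) - 1) / (k - 1) := by
  have : NeZero (m * k) := ⟨Nat.mul_ne_zero (by omega) (by omega)⟩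
  set q := ((m - k) * k + (k - 1) - 1) / (k - 1)
  have hceil_le : (k - 1) * q ≤ (m - k) * k + (k - 1) - 1 := by
    rw [mul_comm (k - 1) q]
    exact Nat.div_mul_le_self _ _
  have le_hceil : (m - k) * k + (k - 1) - 1 < (k - 1) * q + (k - 1) := by
    rw [mul_comm (k - 1) q]
    exact Nat.lt_div_mul_add (by omega)
  have hmk : m * k = (m - k) * k + k * k := by rw [← Nat.add_mul, Nat.sub_add_cancel hkm.le]
  obtain ⟨col, hcol⟩ : ∃ col : ZMod (m * k) → Fin (3 + q), IsAPFreeColoring k col := by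
    rcases lt_or_ge m (2 * k) with hm | hm
    · exact exists_isAPFreeColoring_residue (by omega)
        (le_pred_mul_of_sub_mul_le hk hkm hm.le le_hceil)
    · have h2k : 2 * (k * k) ≤ m * k := by
        rw [← mul_assoc]
        exact Nat.mul_le_mul_right k hm
      have := Nat.le_mul_self k
      have hkk : k * k ≤ (k - 1) * (2 * k - 1) := by
        obtain ⟨j, rfl⟩ : ∃ j, k = j + 3 := ⟨k - 3, by omega⟩
        simp only [show j + 3 - 1 = j + 2 by omega, show 2 * (j + 3) - 1 = 2 * j + 5 by omega]
        nlinarith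
      exact exists_isAPFreeColoring_div_mod_three (by omega) (by omega) (by omega) (by omega)
  exact ⟨two_le_chiNum (Nat.le_mul_of_pos_left k (by omega)) col hcol, chiNum_le col hcol⟩
end
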